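/- arXiv:2509.19655 — 2 statements merged into one kernel-verified Lean document; each statement's English description precedes it below -/
import Mathlib

section
/- Let G be a 2-vertex-connected multigraph with at least 3 vertices. Then there exists a minimum-size 2-edge-connected spanning subgraph of G that contains no self-loops or parallel edges. -/
/-- Reachability in a multigraph given by the endpoint map `ends`, using only
edges from the edge set `F`. -/
def MGReach {V E : Type*} (ends : E → Sym2 V) (F : Set E) (a b : V) : Prop :=
  Relation.ReflTransGen (fun x y => ∃ e ∈ F, ends e = s(x, y)) a b

/-- The edge set `F` is a 2-edge-connected spanning subgraph of the multigraph:
it connects all vertices and keeps doing so after removing any single edge. -/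
def MGTwoECSS {V E : Type*} (ends : E → Sym2 V) (F : Set E) : Prop :=
  (∀ a b : V, MGReach ends F a b) ∧
    ∀ e₀ ∈ F, ∀ a b : V, MGReach ends (F \ {e₀}) a b

/-- A multigraph is 2-vertex-connected: it has at least 3 vertices, it is connected,
and it remains connected after the removal of any single vertex. -/
def MGTwoVC {V E : Type*} (ends : E → Sym2 V) : Prop :=
  3 ≤ Nat.card V ∧ (∀ a b : V, MGReach ends Set.univ a b) ∧
    ∀ v a b : V, a ≠ v → b ≠ v →
      Relation.ReflTransGen
        (fun x y => x ≠ v ∧ y ≠ v ∧ ∃ e : E, ends e = s(x, y)) a b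

/-!
Among the minimum-size 2-edge-connected spanning subgraphs choose one, `F`, for which the set
`ends '' F` of end pairs is largest. A loop of `F` could simply be deleted. If `e, e'` are parallel
edges of `F` with ends `u, v`, then either `F - e` is still a 2ECSS, contradicting minimality, or
`F - e - e'` splits into the component `A` of `u` and the component of `v`. In the second case
2-vertex-connectivity yields an edge `g` leaving `A` that is not a `uv`-edge, and `F - e' + g` is a
2ECSS of the same size with one more end pair.
-/

open Relation Set

theorem Relation.ReflTransGen.exists_rel_mem_notMem {α : Type*} {r : α → α → Prop} {s : Set α}
    {a b : α} (h : ReflTransGen r a b) (ha : a ∈ s) (hb : b ∉ s) :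
    ∃ x y, r x y ∧ x ∈ s ∧ y ∉ s := by
  induction h with
  | refl => exact absurd ha hb
  | @tail c d _ hcd ih =>
    by_cases hc : c ∈ s
    · exact ⟨c, d, hcd, hc, hb⟩
    · exact ih hc

section

variable {V E : Type*} {ends : E → Sym2 V} {F F' : Set E} {e e' g : E} {a b c u v : V}

namespace MGReach

@[refl] lemma refl (a : V) : MGReach ends F a a := ReflTransGen.refl

lemma single (he : e ∈ F) (h : ends e = s(a, b)) : MGReach ends F a b :=
  ReflTransGen.single ⟨e, he, h⟩

lemma trans (hab : MGReach ends F a b) (hbc : MGReach ends F b c) : MGReach ends F a c :=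
  ReflTransGen.trans hab hbc

lemma symm (h : MGReach ends F a b) : MGReach ends F b a :=
  ReflTransGen.mono (fun _ _ ⟨f, hf, hxy⟩ => ⟨f, hf, hxy.trans Sym2.eq_swap⟩) _ _
    (ReflTransGen.swap _ _ h)

lemma of_forall_edge (h : ∀ f ∈ F, ∀ x y, ends f = s(x, y) → MGReach ends F' x y)
    (hab : MGReach ends F a b) : MGReach ends F' a b :=
  reflTransGen_closed (fun x y ⟨f, hf, hxy⟩ => h f hf x y hxy) _ _ hab

lemma mono (hFF' : F ⊆ F') (h : MGReach ends F a b) : MGReach ends F' a b :=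
  h.of_forall_edge fun _ hf _ _ hxy => single (hFF' hf) hxy

lemma sdiff_singleton (he : ∀ x y, ends e = s(x, y) → MGReach ends (F \ {e}) x y)
    (h : MGReach ends F a b) : MGReach ends (F \ {e}) a b :=
  h.of_forall_edge fun f hf x y hxy => by
    by_cases hfe : f = e
    · exact he x y (hfe ▸ hxy)
    · exact single ⟨hf, hfe⟩ hxy

lemma sdiff_singleton_or (he : ends e = s(u, v)) (h : MGReach ends F u c) :
    MGReach ends (F \ {e}) u c ∨ MGReach ends (F \ {e}) v c := by
  induction h with
  | refl => exact .inl (refl u)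
  | @tail c d _ hcd ih =>
    obtain ⟨f, hf, hfcd⟩ := hcd
    by_cases hfe : f = e
    · subst hfe
      rcases Sym2.eq_iff.mp (he.symm.trans hfcd) with ⟨-, rfl⟩ | ⟨rfl, -⟩
      · exact .inr (refl _)
      · exact .inl (refl _)
    · exact ih.imp (·.trans (single ⟨hf, hfe⟩ hfcd)) (·.trans (single ⟨hf, hfe⟩ hfcd))

lemma of_reach_or_reach (huv : MGReach ends F u v)
    (h : ∀ z, MGReach ends F u z ∨ MGReach ends F v z) (a b : V) : MGReach ends F a b := by
  have hu : ∀ z, MGReach ends F u z := fun z => (h z).elim id huv.trans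
  exact (hu a).symm.trans (hu b)

lemma univ_sdiff_of_avoid {w : V} {e₀ : E} (hw : w ∈ ends e₀)
    (h : ReflTransGen (fun x y => x ≠ w ∧ y ≠ w ∧ ∃ e : E, ends e = s(x, y)) a b) :
    MGReach ends (univ \ {e₀}) a b := by
  refine ReflTransGen.mono (fun x y ⟨hx, hy, f, hf⟩ => ⟨f, ⟨mem_univ f, ?_⟩, hf⟩) _ _ h
  rintro rfl
  rw [hf, Sym2.mem_iff] at hw
  exact hw.elim (hx ∘ Eq.symm) (hy ∘ Eq.symm)

end MGReach

namespace MGTwoVC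

lemma exists_ne_ne (h : MGTwoVC ends) (u v : V) : ∃ w, w ≠ u ∧ w ≠ v := by
  have hlt : ({u, v} : Set V).ncard < (univ : Set V).ncard := by
    rw [ncard_univ]
    exact (ncard_insert_le u {v}).trans_lt (by rw [ncard_singleton]; linarith [h.1])
  obtain ⟨w, -, hw⟩ := exists_mem_notMem_of_ncard_lt_ncard hlt
  exact ⟨w, by simpa [not_or] using hw⟩

lemma reach_sdiff_singleton (h : MGTwoVC ends) {e₀ : E} (hab : ends e₀ = s(a, b)) :
    MGReach ends (univ \ {e₀}) a b := by
  rcases eq_or_ne a b with rfl | hne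
  · rfl
  obtain ⟨w, hwa, hwb⟩ := h.exists_ne_ne a b
  exact (MGReach.univ_sdiff_of_avoid (hab ▸ Sym2.mem_mk_right a b) (h.2.2 b a w hne hwb)).trans
    (MGReach.univ_sdiff_of_avoid (hab ▸ Sym2.mem_mk_left a b) (h.2.2 a w b hwa hne.symm))

lemma twoECSS_univ (h : MGTwoVC ends) : MGTwoECSS ends (univ : Set E) :=
  ⟨h.2.1, fun _ _ a b => (h.2.1 a b).sdiff_singleton fun _ _ => h.reach_sdiff_singleton⟩

lemma exists_edge_mem_notMem (h : MGTwoVC ends) {A : Set V} (hu : u ∈ A) (hv : v ∉ A) :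
    ∃ g x y, ends g = s(x, y) ∧ x ∈ A ∧ y ∉ A ∧ ends g ≠ s(u, v) := by
  have hcross : ∀ {a b w}, a ∈ A → b ∉ A → a ≠ w → b ≠ w → w ∈ s(u, v) →
      ∃ g x y, ends g = s(x, y) ∧ x ∈ A ∧ y ∉ A ∧ ends g ≠ s(u, v) := by
    intro a b w ha hb haw hbw hw
    obtain ⟨x, y, ⟨hx, hy, g, hg⟩, hxA, hyA⟩ := (h.2.2 w a b haw hbw).exists_rel_mem_notMem ha hb
    refine ⟨g, x, y, hg, hxA, hyA, fun hguv => ?_⟩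
    rw [← hguv, hg, Sym2.mem_iff] at hw
    exact hw.elim (hx ∘ Eq.symm) (hy ∘ Eq.symm)
  have huv : u ≠ v := fun h => hv (h ▸ hu)
  by_cases hA : ∃ w ∈ A, w ≠ u
  · obtain ⟨w, hwA, hwu⟩ := hA
    exact hcross hwA hv hwu huv.symm (Sym2.mem_mk_left u v)
  · push Not at hA
    obtain ⟨w, hwu, hwv⟩ := h.exists_ne_ne u v
    exact hcross hu (fun hw => hwu (hA w hw)) huv hwv (Sym2.mem_mk_right u v)

end MGTwoVC

namespace MGTwoECSS

lemma sdiff_singleton (hF : MGTwoECSS ends F) (he : e ∈ F)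
    (hends : ∀ e₀ ∈ F, e₀ ≠ e → ∀ x y, ends e = s(x, y) → MGReach ends ((F \ {e₀}) \ {e}) x y) :
    MGTwoECSS ends (F \ {e}) :=
  ⟨hF.2 e he, fun e₀ he₀ a b => by
    rw [sdiff_sdiff_comm]
    exact (hF.2 e₀ he₀.1 a b).sdiff_singleton (hends e₀ he₀.1 he₀.2)⟩

lemma sdiff_loop (hF : MGTwoECSS ends F) (he : e ∈ F) (hloop : (ends e).IsDiag) :
    MGTwoECSS ends (F \ {e}) :=
  hF.sdiff_singleton he fun _ _ _ x y hxy => by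
    rw [hxy, Sym2.mk_isDiag_iff] at hloop
    subst hloop
    rfl

lemma sdiff_parallel (hF : MGTwoECSS ends F) (he : e ∈ F) (he' : e' ∈ F) (hne : e ≠ e')
    (heq : ends e = ends e') (hD : ∀ a b, MGReach ends ((F \ {e'}) \ {e}) a b) :
    MGTwoECSS ends (F \ {e}) :=
  hF.sdiff_singleton he fun e₀ _ _ x y hxy => by
    by_cases h : e₀ = e'
    · exact h ▸ hD x y
    · exact .single ⟨⟨he', fun h' => h h'.symm⟩, hne.symm⟩ (heq.symm.trans hxy)

lemma insert_sdiff_parallel (hF : MGTwoECSS ends F) (he : e ∈ F) (he' : e' ∈ F) (hne : e ≠ e')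
    (heq : ends e = ends e') (hgF : g ∉ F)
    (hD : ∀ a b, MGReach ends (insert g ((F \ {e'}) \ {e})) a b) :
    MGTwoECSS ends (insert g (F \ {e'})) := by
  refine ⟨fun a b => (hF.2 e' he' a b).mono (subset_insert _ _), fun e₀ hmem a b => ?_⟩
  rcases eq_or_ne e₀ g with rfl | hg₀
  · refine (hF.2 e' he' a b).mono fun f hf => ⟨mem_insert_of_mem _ hf, ?_⟩
    rintro rfl
    exact hgF hf.1
  rcases eq_or_ne e₀ e with rfl | he₀
  · refine (hD a b).mono (insert_subset ⟨mem_insert _ _, ?_⟩ fun f hf => ?_)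
    · rintro rfl
      exact hgF he
    · exact ⟨mem_insert_of_mem _ hf.1, hf.2⟩
  have he₀F : e₀ ∈ F := ((mem_insert_iff.mp hmem).resolve_left hg₀).1
  refine (hF.2 e₀ he₀F a b).of_forall_edge fun f hf x y hxy => ?_
  by_cases hfe' : f = e'
  · exact .single ⟨mem_insert_of_mem _ ⟨he, hne⟩, he₀.symm⟩ (heq.trans (hfe' ▸ hxy))
  · exact .single ⟨mem_insert_of_mem _ ⟨hf.1, hfe'⟩, hf.2⟩ hxy

lemma exists_exchange (h2vc : MGTwoVC ends) (hF : MGTwoECSS ends F) (he : e ∈ F) (he' : e' ∈ F)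
    (hne : e ≠ e') (heq : ends e = ends e') (hD : ¬ ∀ a b, MGReach ends ((F \ {e'}) \ {e}) a b) :
    ∃ g, ends g ∉ ends '' F ∧ MGTwoECSS ends (insert g (F \ {e'})) := by
  obtain ⟨u, v, huv⟩ : ∃ u v, ends e = s(u, v) := Sym2.ind (fun u v => ⟨u, v, rfl⟩) (ends e)
  set D := (F \ {e'}) \ {e}
  set A := {x | MGReach ends D u x}
  have hsplit : ∀ z, z ∈ A ∨ MGReach ends D v z :=
    fun z => (hF.2 e' he' u z).sdiff_singleton_or huv
  have hvA : v ∉ A := fun hv => hD (MGReach.of_reach_or_reach hv hsplit)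
  obtain ⟨g, x, y, hg, hxA, hyA, hguv⟩ :=
    h2vc.exists_edge_mem_notMem (show u ∈ A from .refl u) hvA
  have hgF : ends g ∉ ends '' F := by
    rintro ⟨f, hf, hfg⟩
    rcases eq_or_ne f e' with rfl | hfe'
    · exact hguv (hfg.symm.trans (heq.symm.trans huv))
    rcases eq_or_ne f e with rfl | hfe
    · exact hguv (hfg.symm.trans huv)
    exact hyA (hxA.trans (.single ⟨⟨hf, hfe'⟩, hfe⟩ (hfg.trans hg)))
  have hyv : MGReach ends D v y := (hsplit y).resolve_left hyA
  have hu : MGReach ends (insert g D) u v :=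
    ((hxA.mono (subset_insert _ _)).trans (.single (mem_insert g D) hg)).trans
      (hyv.mono (subset_insert _ _)).symm
  refine ⟨g, hgF, hF.insert_sdiff_parallel he he' hne heq (fun h => hgF ⟨g, h, rfl⟩) ?_⟩
  exact MGReach.of_reach_or_reach hu fun z =>
    (hsplit z).imp (·.mono (subset_insert _ _)) (·.mono (subset_insert _ _))

variable [Finite E]

lemma not_isDiag (hF : MGTwoECSS ends F) (hmin : ∀ F', MGTwoECSS ends F' → F.ncard ≤ F'.ncard)
    (he : e ∈ F) : ¬ (ends e).IsDiag := fun hloop =>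
  (ncard_sdiff_singleton_lt_of_mem he).not_ge (hmin _ (hF.sdiff_loop he hloop))

lemma exists_ncard_image_lt (h2vc : MGTwoVC ends) (hF : MGTwoECSS ends F)
    (hmin : ∀ F', MGTwoECSS ends F' → F.ncard ≤ F'.ncard) (he : e ∈ F) (he' : e' ∈ F)
    (hne : e ≠ e') (heq : ends e = ends e') :
    ∃ F', MGTwoECSS ends F' ∧ F'.ncard = F.ncard ∧ (ends '' F).ncard < (ends '' F').ncard := by
  by_cases hD : ∀ a b, MGReach ends ((F \ {e'}) \ {e}) a b
  · exact absurd (hmin _ (hF.sdiff_parallel he he' hne heq hD))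
      (ncard_sdiff_singleton_lt_of_mem he).not_ge
  obtain ⟨g, hgF, hF'⟩ := hF.exists_exchange h2vc he he' hne heq hD
  have himage : ends '' (F \ {e'}) = ends '' F := (image_mono sdiff_subset).antisymm <| by
    rintro _ ⟨f, hf, rfl⟩
    by_cases hfe' : f = e'
    · exact ⟨e, ⟨he, hne⟩, heq.trans (congrArg ends hfe'.symm)⟩
    · exact ⟨f, ⟨hf, hfe'⟩, rfl⟩
  refine ⟨_, hF', ?_, ?_⟩
  · rw [ncard_insert_of_notMem fun h => hgF ⟨g, h.1, rfl⟩, ncard_sdiff_singleton_add_one he']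
  · rw [image_insert_eq, himage, ncard_insert_of_notMem hgF]
    exact lt_add_one _

end MGTwoECSS

end

theorem exists_min_simple_2ECSS_general {V E : Type*} [Fintype E]
    (ends : E → Sym2 V) (h2vc : MGTwoVC ends) :
    ∃ F : Set E, MGTwoECSS ends F ∧
      (∀ F' : Set E, MGTwoECSS ends F' → F.ncard ≤ F'.ncard) ∧
      (∀ e ∈ F, ¬ (ends e).IsDiag) ∧
      ∀ e ∈ F, ∀ e' ∈ F, e ≠ e' → ends e ≠ ends e' := by
  obtain ⟨F₀, hF₀, hF₀min⟩ := {F : Set E | MGTwoECSS ends F}.exists_min_image ncard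
    (toFinite _) ⟨univ, h2vc.twoECSS_univ⟩
  obtain ⟨F, ⟨hF, hFcard⟩, hFmax⟩ :=
    {F : Set E | MGTwoECSS ends F ∧ F.ncard = F₀.ncard}.exists_max_image
      (fun F => (ends '' F).ncard) (toFinite _) ⟨F₀, hF₀, rfl⟩
  have hmin : ∀ F' : Set E, MGTwoECSS ends F' → F.ncard ≤ F'.ncard :=
    fun F' hF' => hFcard ▸ hF₀min F' hF'
  refine ⟨F, hF, hmin, fun e he => hF.not_isDiag hmin he, fun e he e' he' hne heq => ?_⟩
  obtain ⟨F', hF', hcard, hlt⟩ := hF.exists_ncard_image_lt h2vc hmin he he' hne heq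
  exact (hFmax F' ⟨hF', hcard.trans hFcard⟩).not_gt hlt

/-- Let `G` be a 2-vertex-connected multigraph with at least 3 vertices.  Then there
exists a minimum-size 2-edge-connected spanning subgraph of `G` that contains no
self-loops or parallel edges. -/
theorem exists_min_simple_2ECSS {V E : Type*} [Fintype V] [Fintype E]
    (ends : E → Sym2 V) (h2vc : MGTwoVC ends) :
    ∃ F : Set E, MGTwoECSS ends F ∧
      (∀ F' : Set E, MGTwoECSS ends F' → F.ncard ≤ F'.ncard) ∧
      (∀ e ∈ F, ¬ (ends e).IsDiag) ∧
      ∀ e ∈ F, ∀ e' ∈ F, e ≠ e' → ends e ≠ ends e' :=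
  exists_min_simple_2ECSS_general ends h2vc
end

section
/- Let H ⊆ E(G) be connected and spanning in a graph G, let {u,v,w} be a vertex set, and let (E1, E2) be a partition of H such that E1 and E2 only share the vertices {u,v,w}. Suppose that for each i ∈ {1,2}, every edge e ∈ E_i either lies in a 2-edge-connected component of E_i, or lies on an x–y path in E_i for some distinct x, y ∈ {u,v,w} such that E_{3−i} also contains an x–y path. Then H is a 2-edge-connected spanning subgraph of G. -/
variable {V : Type*}

/-- Reachability between vertices using only edges from the edge set `F`. -/
def ReachE (F : Set (Sym2 V)) (a b : V) : Prop :=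
  Relation.ReflTransGen (fun x y => s(x, y) ∈ F) a b

/-- The set of vertices incident to at least one edge of `F`. -/
def eSupport (F : Set (Sym2 V)) : Set V :=
  {v | ∃ e ∈ F, v ∈ e}

/-- The edge set `F` is connected (as a graph on its support). -/
def ConnSet (F : Set (Sym2 V)) : Prop :=
  ∀ a ∈ eSupport F, ∀ b ∈ eSupport F, ReachE F a b

/-- The edge set `F` is a 2-edge-connected subgraph (on its support). -/
def TwoECSet (F : Set (Sym2 V)) : Prop :=
  ConnSet F ∧ ∀ a b : V, s(a, b) ∈ F → ReachE (F \ {s(a, b)}) a b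

/-- `H` is a 2-edge-connected spanning subgraph: it connects all vertices and keeps
doing so after removing any single edge. -/
def TwoECSS (H : Set (Sym2 V)) : Prop :=
  (∀ a b : V, ReachE H a b) ∧ ∀ e ∈ H, ∀ a b : V, ReachE (H \ {e}) a b

/-- The condition of the lemma on the side `Ei` (with the other side `Ej`):
every edge `e ∈ Ei` either lies in a 2-edge-connected component of `Ei`, or lies on an
`x`–`y` path in `Ei` for some distinct `x, y ∈ {u,v,w}` such that `Ej` also contains an
`x`–`y` path. -/
def SideCondition (u v w : V) (Ei Ej : Set (Sym2 V)) : Prop :=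
  ∀ e ∈ Ei,
    (∃ C ⊆ Ei, TwoECSet C ∧ e ∈ C) ∨
    ∃ x ∈ ({u, v, w} : Set V), ∃ y ∈ ({u, v, w} : Set V), x ≠ y ∧
      (∃ a b : V, e = s(a, b) ∧ ReachE (Ei \ {e}) x a ∧ ReachE (Ei \ {e}) b y) ∧
      ReachE Ej x y

/-!
Deleting an edge `e` of `H` disconnects nothing as long as the ends of `e` stay connected in
`H \ {e}`. If `e` lies in a 2-edge-connected piece of its side, this is immediate. Otherwise `e`
lies on an `x`–`y` path of its side, and an `x`–`y` path of the other side, which avoids `e`,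
closes a cycle through `e`.
-/

namespace ReachE

variable {F F' : Set (Sym2 V)} {a b c : V}

lemma mono (h : F ⊆ F') (hr : ReachE F a b) : ReachE F' a b :=
  Relation.ReflTransGen.mono (fun _ _ hxy => h hxy) _ _ hr

lemma symm (hr : ReachE F a b) : ReachE F b a :=
  haveI : Std.Symm (fun x y : V => s(x, y) ∈ F) := ⟨fun x y hxy => by rwa [Sym2.eq_swap]⟩
  Relation.ReflTransGen.stdSymm.symm _ _ hr

lemma trans (h₁ : ReachE F a b) (h₂ : ReachE F b c) : ReachE F a c :=
  Relation.ReflTransGen.trans h₁ h₂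

lemma of_sym2_eq {a' b' : V} (h : s(a, b) = s(a', b')) (hr : ReachE F a' b') :
    ReachE F a b := by
  rcases Sym2.eq_iff.mp h with ⟨rfl, rfl⟩ | ⟨rfl, rfl⟩
  exacts [hr, hr.symm]

lemma diff_singleton {e : Sym2 V} (hbypass : ∀ x y, s(x, y) = e → ReachE (F \ {e}) x y)
    (hr : ReachE F a b) : ReachE (F \ {e}) a b := by
  induction hr with
  | refl => exact .refl
  | @tail x y _ hxy ih =>
    by_cases hxye : s(x, y) = e
    · exact ih.trans (hbypass x y hxye)
    · exact .tail ih ⟨hxy, hxye⟩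

end ReachE

lemma TwoECSet.reachE_diff_singleton {C F : Set (Sym2 V)} (hC : TwoECSet C) (hCF : C ⊆ F)
    {a b : V} (hab : s(a, b) ∈ C) : ReachE (F \ {s(a, b)}) a b :=
  (hC.2 a b hab).mono (Set.sdiff_subset_sdiff_left hCF)

lemma reachE_diff_singleton_of_cycle {F F' : Set (Sym2 V)} {a b x y : V}
    (hF' : F' ⊆ F \ {s(a, b)}) (hxa : ReachE (F \ {s(a, b)}) x a)
    (hby : ReachE (F \ {s(a, b)}) b y) (hxy : ReachE F' x y) :
    ReachE (F \ {s(a, b)}) a b :=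
  hxa.symm.trans ((hxy.mono hF').trans hby.symm)

lemma SideCondition.reachE_diff_singleton {u v w : V} {Ei Ej F : Set (Sym2 V)}
    (hc : SideCondition u v w Ei Ej) (hEi : Ei ⊆ F) (hEj : Ej ⊆ F) (hdisj : Disjoint Ei Ej)
    {a b : V} (hab : s(a, b) ∈ Ei) : ReachE (F \ {s(a, b)}) a b := by
  rcases hc _ hab with ⟨C, hCEi, hC, habC⟩ | ⟨x, -, y, -, -, ⟨a', b', hab', hxa', hb'y⟩, hxy⟩
  · exact hC.reachE_diff_singleton (hCEi.trans hEi) habC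
  · have hEi' : Ei \ {s(a, b)} ⊆ F \ {s(a, b)} := Set.sdiff_subset_sdiff_left hEi
    have hEj' : Ej ⊆ F \ {s(a, b)} := fun f hf =>
      ⟨hEj hf, fun hfe => hdisj.ne_of_mem hab hf (Set.mem_singleton_iff.mp hfe).symm⟩
    rw [hab'] at hEi' hEj' hxa' hb'y ⊢
    exact .of_sym2_eq hab' <|
      reachE_diff_singleton_of_cycle hEj' (hxa'.mono hEi') (hb'y.mono hEi') hxy

theorem glue_two_sides_two_edge_connected_general
    (H : Set (Sym2 V))
    (hspan : ∀ a b : V, ReachE H a b)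
    (u v w : V)
    (E1 E2 : Set (Sym2 V)) (hunion : E1 ∪ E2 = H) (hdisj : Disjoint E1 E2)
    (hcond1 : SideCondition u v w E1 E2)
    (hcond2 : SideCondition u v w E2 E1) :
    TwoECSS H := by
  have hE1 : E1 ⊆ H := hunion ▸ Set.subset_union_left
  have hE2 : E2 ⊆ H := hunion ▸ Set.subset_union_right
  refine ⟨hspan, fun e he a b => (hspan a b).diff_singleton ?_⟩
  rintro x y rfl
  rcases hunion ▸ he with h1 | h2
  · exact hcond1.reachE_diff_singleton hE1 hE2 hdisj h1
  · exact hcond2.reachE_diff_singleton hE2 hE1 hdisj.symm h2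

/-- Let `H ⊆ E(G)` be connected and spanning in a graph `G`, let `{u,v,w}` be a vertex
set, and let `(E1, E2)` be a partition of `H` such that `E1` and `E2` only share the
vertices `{u,v,w}`.  Suppose that for each `i ∈ {1,2}` every edge of `E_i` either lies
in a 2-edge-connected component of `E_i` or lies on an `x`–`y` path in `E_i` for
distinct `x, y ∈ {u,v,w}` such that `E_{3-i}` also contains an `x`–`y` path.
Then `H` is a 2-edge-connected spanning subgraph of `G`. -/
theorem glue_two_sides_two_edge_connected (G : SimpleGraph V)
    (H : Set (Sym2 V)) (hHG : H ⊆ G.edgeSet)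
    (hspan : ∀ a b : V, ReachE H a b)
    (u v w : V)
    (E1 E2 : Set (Sym2 V)) (hunion : E1 ∪ E2 = H) (hdisj : Disjoint E1 E2)
    (hshare : eSupport E1 ∩ eSupport E2 ⊆ ({u, v, w} : Set V))
    (hcond1 : SideCondition u v w E1 E2)
    (hcond2 : SideCondition u v w E2 E1) :
    TwoECSS H :=
  glue_two_sides_two_edge_connected_general H hspan u v w E1 E2 hunion hdisj hcond1 hcond2
end
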